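/- arXiv:2404.17518 — 2 statements merged into one kernel-verified Lean document; each statement's English description precedes it below -/
import Mathlib

section
/- Let 𝔡 be a Lie algebra with a nondegenerate ad-invariant symmetric bilinear form, and let 𝔠 ⊆ 𝔡 be a Lie subalgebra containing a Lagrangian Lie subalgebra 𝔤. Then the orthogonal complement 𝔨 = 𝔠^⊥ is an ideal in 𝔠, and moreover 𝔨 ⊆ 𝔤 and 𝔨 is an ideal in 𝔤. -/
/-- The orthogonal complement of a subspace with respect to a bilinear form. -/
def orth {V : Type*} [AddCommGroup V] [Module ℝ V]
    (B : V →ₗ[ℝ] V →ₗ[ℝ] ℝ) (W : Submodule ℝ V) : Submodule ℝ V where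
  carrier := {x | ∀ w ∈ W, B x w = 0}
  add_mem' := by
    intro a b ha hb w hw
    simp only [Set.mem_setOf_eq] at *
    rw [map_add, LinearMap.add_apply, ha w hw, hb w hw, add_zero]
  zero_mem' := by
    intro w hw
    simp
  smul_mem' := by
    intro c a ha w hw
    simp only [Set.mem_setOf_eq] at *
    rw [map_smul, LinearMap.smul_apply, ha w hw, smul_zero]

/-- Let 𝔡 be a Lie algebra with a nondegenerate ad-invariant symmetric
bilinear form, and let 𝔠 ⊆ 𝔡 be a Lie subalgebra containing a Lagrangian Lie subalgebra 𝔤.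
Then 𝔨 = 𝔠^⊥ satisfies 𝔨 ⊆ 𝔠, 𝔨 is an ideal in 𝔠, 𝔨 ⊆ 𝔤, and 𝔨 is an ideal in 𝔤. -/
theorem stmt0 (𝔡 : Type*) [LieRing 𝔡] [LieAlgebra ℝ 𝔡]
    (B : 𝔡 →ₗ[ℝ] 𝔡 →ₗ[ℝ] ℝ)
    (hsymm : ∀ x y : 𝔡, B x y = B y x)
    (hnondeg : ∀ x : 𝔡, (∀ y : 𝔡, B x y = 0) → x = 0)
    (hinv : ∀ x y z : 𝔡, B ⁅x, y⁆ z + B y ⁅x, z⁆ = 0)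
    (𝔤 𝔠 : LieSubalgebra ℝ 𝔡) (h𝔤𝔠 : 𝔤 ≤ 𝔠)
    (hLag : orth B 𝔤.toSubmodule = 𝔤.toSubmodule) :
    orth B 𝔠.toSubmodule ≤ 𝔠.toSubmodule ∧
    (∀ x ∈ 𝔠, ∀ k ∈ orth B 𝔠.toSubmodule, ⁅x, k⁆ ∈ orth B 𝔠.toSubmodule) ∧
    orth B 𝔠.toSubmodule ≤ 𝔤.toSubmodule ∧
    (∀ x ∈ 𝔤, ∀ k ∈ orth B 𝔠.toSubmodule, ⁅x, k⁆ ∈ orth B 𝔠.toSubmodule) := by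
  have hsub : orth B 𝔠.toSubmodule ≤ 𝔤.toSubmodule := by
    intro k hk
    rw [← hLag]
    intro w hw
    exact hk w (h𝔤𝔠 hw)
  have hideal : ∀ x ∈ 𝔠, ∀ k ∈ orth B 𝔠.toSubmodule, ⁅x, k⁆ ∈ orth B 𝔠.toSubmodule := by
    intro x hx k hk w hw
    have h1 := hinv x k w
    have h2 : B k ⁅x, w⁆ = 0 := hk _ (𝔠.lie_mem hx hw)
    linarith
  exact ⟨le_trans hsub h𝔤𝔠, hideal, hsub, fun x hx => hideal x (h𝔤𝔠 hx)⟩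
end

section
/- Let G be a group acting on sets M₁ and M₂, and suppose K ⊆ G is a normal subgroup acting freely on a set Q, with G-equivariant maps Φᵢ: Mᵢ → Q. If the K-action on Q is free, then the K-actions on M₁ and M₂ are free; moreover M ↦ M/K together with Φ ↦ Φ' (the induced map M/K → Q/K) gives, for any G-set M with equivariant map to Q, a G/K-set M/K with equivariant map to Q/K, and M is recovered up to equivariant isomorphism as the fiber product M/K ×_{Q/K} Q. -/
/-- Let K ⊴ G act freely on a G-set Q, with G-equivariant maps
Φᵢ : Mᵢ → Q.  Then K acts freely on M₁ and M₂; Φ₁ descends to a unique map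
Φ' : M₁/K → Q/K; M₁/K carries a G-action in which K acts trivially (i.e. a G/K-action);
and M₁ is recovered as the fiber product (M₁/K) ×_{Q/K} Q via m ↦ (⟦m⟧, Φ₁(m)). -/
theorem stmt17 (G : Type*) [Group G] (K : Subgroup G) [K.Normal]
    (Q M₁ M₂ : Type*) [MulAction G Q] [MulAction G M₁] [MulAction G M₂]
    (hfree : ∀ (k : ↥K) (q : Q), (k : G) • q = q → k = 1)
    (Φ₁ : M₁ → Q) (hΦ₁ : ∀ (g : G) (m : M₁), Φ₁ (g • m) = g • Φ₁ m)
    (Φ₂ : M₂ → Q) (hΦ₂ : ∀ (g : G) (m : M₂), Φ₂ (g • m) = g • Φ₂ m) :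
    -- K acts freely on M₁ and on M₂
    (∀ (k : ↥K) (m : M₁), (k : G) • m = m → k = 1) ∧
    (∀ (k : ↥K) (m : M₂), (k : G) • m = m → k = 1) ∧
    -- Φ₁ descends to a unique map Φ' : M₁/K → Q/K
    (∃! Φ' : Quotient (MulAction.orbitRel ↥K M₁) → Quotient (MulAction.orbitRel ↥K Q),
      ∀ m : M₁, Φ' (Quotient.mk (MulAction.orbitRel ↥K M₁) m) =
        Quotient.mk (MulAction.orbitRel ↥K Q) (Φ₁ m)) ∧
    -- M₁/K carries a G-action descending the one on M₁, on which K acts trivially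
    (∃ act : G → Quotient (MulAction.orbitRel ↥K M₁) → Quotient (MulAction.orbitRel ↥K M₁),
      (∀ (g : G) (m : M₁), act g (Quotient.mk (MulAction.orbitRel ↥K M₁) m) =
        Quotient.mk (MulAction.orbitRel ↥K M₁) (g • m)) ∧
      (∀ k ∈ K, act k = id) ∧ (act 1 = id) ∧
      (∀ g h : G, act (g * h) = act g ∘ act h)) ∧
    -- M₁ ≅ (M₁/K) ×_{Q/K} Q via m ↦ (⟦m⟧, Φ₁(m))
    (∀ (Φ' : Quotient (MulAction.orbitRel ↥K M₁) → Quotient (MulAction.orbitRel ↥K Q))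
      (h : ∀ m : M₁, Φ' (Quotient.mk (MulAction.orbitRel ↥K M₁) m) =
        Quotient.mk (MulAction.orbitRel ↥K Q) (Φ₁ m)),
      Function.Bijective (fun m : M₁ =>
        (⟨(Quotient.mk (MulAction.orbitRel ↥K M₁) m, Φ₁ m), h m⟩ :
          {p : Quotient (MulAction.orbitRel ↥K M₁) × Q //
            Φ' p.1 = Quotient.mk (MulAction.orbitRel ↥K Q) p.2}))) := by
  have rel₁ : ∀ m m' : M₁, (MulAction.orbitRel ↥K M₁).r m m' ↔ ∃ k : ↥K, (k : G) • m' = m := by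
    intro m m'
    constructor
    · rintro ⟨k, hk⟩; exact ⟨k, hk⟩
    · rintro ⟨k, hk⟩; exact ⟨k, hk⟩
  have relQ : ∀ q q' : Q, (MulAction.orbitRel ↥K Q).r q q' ↔ ∃ k : ↥K, (k : G) • q' = q := by
    intro q q'
    constructor
    · rintro ⟨k, hk⟩; exact ⟨k, hk⟩
    · rintro ⟨k, hk⟩; exact ⟨k, hk⟩
  refine ⟨?_, ?_, ?_, ?_, ?_⟩
  · intro k m hk
    apply hfree k (Φ₁ m)
    rw [← hΦ₁, hk]
  · intro k m hk
    apply hfree k (Φ₂ m)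
    rw [← hΦ₂, hk]
  · refine ⟨Quotient.lift (fun m => Quotient.mk (MulAction.orbitRel ↥K Q) (Φ₁ m)) ?_,
      fun m => rfl, ?_⟩
    · intro a b hab
      obtain ⟨k, hk⟩ := (rel₁ a b).1 hab
      apply Quotient.sound
      exact (relQ _ _).2 ⟨k, by rw [← hk, hΦ₁]⟩
    · intro Φ' hΦ'
      funext x
      induction x using Quotient.ind with
      | _ m => exact hΦ' m
  · refine ⟨fun g => Quotient.lift
      (fun m => Quotient.mk (MulAction.orbitRel ↥K M₁) (g • m)) ?_, fun g m => rfl, ?_, ?_, ?_⟩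
    · intro a b hab
      obtain ⟨k, hk⟩ := (rel₁ a b).1 hab
      apply Quotient.sound
      refine (rel₁ _ _).2 ⟨⟨g * (k : G) * g⁻¹, Subgroup.Normal.conj_mem ‹K.Normal› _ k.2 g⟩, ?_⟩
      rw [← hk]
      show (g * (k : G) * g⁻¹) • _ • b = _ • (k : G) • b
      rw [smul_smul, smul_smul]
      congr 1
      group
    · intro k hk
      funext x
      induction x using Quotient.ind with
      | _ m =>
        apply Quotient.sound
        exact (rel₁ _ _).2 ⟨⟨k, hk⟩, rfl⟩
    · funext x
      induction x using Quotient.ind with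
      | _ m => simp
    · intro g h
      funext x
      induction x using Quotient.ind with
      | _ m => simp [mul_smul]
  · intro Φ' h
    constructor
    · intro a b hab
      have h1 : Quotient.mk (MulAction.orbitRel ↥K M₁) a
          = Quotient.mk (MulAction.orbitRel ↥K M₁) b := congrArg (·.1.1) hab
      have h2 : Φ₁ a = Φ₁ b := congrArg (·.1.2) hab
      obtain ⟨k, hk⟩ := (rel₁ a b).1 (Quotient.exact h1)
      have : (k : G) • Φ₁ b = Φ₁ b := by rw [← hΦ₁, hk, h2]
      have hk1 : k = 1 := hfree k _ this
      rw [← hk, hk1]; simp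
    · rintro ⟨⟨x, q⟩, hx⟩
      induction x using Quotient.ind with
      | _ m =>
        rw [h m] at hx
        obtain ⟨k, hk⟩ := (relQ _ _).1 (Quotient.exact hx)
        refine ⟨(k : G)⁻¹ • m, ?_⟩
        apply Subtype.ext
        apply Prod.ext
        · apply Quotient.sound
          exact (rel₁ _ _).2 ⟨k⁻¹, rfl⟩
        · show Φ₁ ((k : G)⁻¹ • m) = q
          rw [hΦ₁, ← hk]
          simp
end
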